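/- arXiv:2304.04251 — 2 statements merged into one kernel-verified Lean document; each statement's English description precedes it below -/
import Mathlib

section
/- Let T = Trias₃⁸ be the 3-dimensional real algebra with basis e₁, e₂, e₃ and products e₂⊣e₂ = e₁, e₂⊣e₃ = e₁, e₃⊣e₂ = e₁, e₃⊣e₃ = e₁; e₂⊢e₂ = e₁, e₂⊢e₃ = e₁, e₃⊢e₂ = e₁; e₂⊥e₂ = e₁, e₂⊥e₃ = e₁, e₃⊥e₂ = e₁ (all other products of basis vectors are zero). Then a linear map d : T → T is a derivation of T if and only if there exist α, β, γ ∈ ℝ with d(e₁) = α e₁, d(e₂) = β e₁ + (α/2) e₂, d(e₃) = γ e₁ + (α/2) e₃; in particular the space Der(T) of derivations has dimension 3. -/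
/-- The space of derivations of an algebra with three bilinear products `l`, `r`, `m`:
linear maps satisfying the Leibniz rule for each of the three products. -/
def DerSubmodule {E : Type*} [AddCommGroup E] [Module ℝ E]
    (l r m : E →ₗ[ℝ] E →ₗ[ℝ] E) : Submodule ℝ (E →ₗ[ℝ] E) where
  carrier := {d | ∀ x y : E,
    d (l x y) = l (d x) y + l x (d y) ∧
    d (r x y) = r (d x) y + r x (d y) ∧
    d (m x y) = m (d x) y + m x (d y)}
  add_mem' := by
    intro a b ha hb x y
    obtain ⟨h1, h2, h3⟩ := ha x y
    obtain ⟨g1, g2, g3⟩ := hb x y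
    refine ⟨?_, ?_, ?_⟩ <;>
      simp only [LinearMap.add_apply, h1, h2, h3, g1, g2, g3, map_add] <;> abel
  zero_mem' := by
    intro x y
    simp
  smul_mem' := by
    intro c a ha x y
    obtain ⟨h1, h2, h3⟩ := ha x y
    refine ⟨?_, ?_, ?_⟩ <;>
      simp only [LinearMap.smul_apply, h1, h2, h3, map_smul, smul_add]

/-- The centroid of an algebra with three bilinear products `l`, `r`, `m`:
linear maps ψ with ψ(x•y) = ψ(x)•y = x•ψ(y) for each of the three products. -/
def CentroidSubmodule {E : Type*} [AddCommGroup E] [Module ℝ E]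
    (l r m : E →ₗ[ℝ] E →ₗ[ℝ] E) : Submodule ℝ (E →ₗ[ℝ] E) where
  carrier := {ψ | ∀ x y : E,
    (ψ (l x y) = l (ψ x) y ∧ ψ (l x y) = l x (ψ y)) ∧
    (ψ (r x y) = r (ψ x) y ∧ ψ (r x y) = r x (ψ y)) ∧
    (ψ (m x y) = m (ψ x) y ∧ ψ (m x y) = m x (ψ y))}
  add_mem' := by
    intro a b ha hb x y
    obtain ⟨⟨h1, h1'⟩, ⟨h2, h2'⟩, ⟨h3, h3'⟩⟩ := ha x y
    obtain ⟨⟨g1, g1'⟩, ⟨g2, g2'⟩, ⟨g3, g3'⟩⟩ := hb x y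
    refine ⟨⟨?_, ?_⟩, ⟨?_, ?_⟩, ⟨?_, ?_⟩⟩
    · simp only [LinearMap.add_apply, map_add, h1, g1]
    · simp only [LinearMap.add_apply, map_add, h1', g1']
    · simp only [LinearMap.add_apply, map_add, h2, g2]
    · simp only [LinearMap.add_apply, map_add, h2', g2']
    · simp only [LinearMap.add_apply, map_add, h3, g3]
    · simp only [LinearMap.add_apply, map_add, h3', g3']
  zero_mem' := by
    intro x y
    simp
  smul_mem' := by
    intro c a ha x y
    obtain ⟨⟨h1, h1'⟩, ⟨h2, h2'⟩, ⟨h3, h3'⟩⟩ := ha x y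
    refine ⟨⟨?_, ?_⟩, ⟨?_, ?_⟩, ⟨?_, ?_⟩⟩
    · simp only [LinearMap.smul_apply, map_smul, h1]
    · simp only [LinearMap.smul_apply, map_smul, h1']
    · simp only [LinearMap.smul_apply, map_smul, h2]
    · simp only [LinearMap.smul_apply, map_smul, h2']
    · simp only [LinearMap.smul_apply, map_smul, h3]
    · simp only [LinearMap.smul_apply, map_smul, h3']

/-- The first basis vector of ℝ³. -/
def e1 : Fin 3 → ℝ := ![1, 0, 0]

/-- The second basis vector of ℝ³. -/
def e2 : Fin 3 → ℝ := ![0, 1, 0]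

/-- The third basis vector of ℝ³. -/
def e3 : Fin 3 → ℝ := ![0, 0, 1]

lemma decomp (x : Fin 3 → ℝ) : x = x 0 • e1 + x 1 • e2 + x 2 • e3 := by
  funext i; fin_cases i <;> simp [e1, e2, e3]

lemma leibniz_ext (p : (Fin 3 → ℝ) →ₗ[ℝ] (Fin 3 → ℝ) →ₗ[ℝ] (Fin 3 → ℝ))
    (d : (Fin 3 → ℝ) →ₗ[ℝ] (Fin 3 → ℝ))
    (h11 : d (p e1 e1) = p (d e1) e1 + p e1 (d e1))
    (h12 : d (p e1 e2) = p (d e1) e2 + p e1 (d e2))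
    (h13 : d (p e1 e3) = p (d e1) e3 + p e1 (d e3))
    (h21 : d (p e2 e1) = p (d e2) e1 + p e2 (d e1))
    (h22 : d (p e2 e2) = p (d e2) e2 + p e2 (d e2))
    (h23 : d (p e2 e3) = p (d e2) e3 + p e2 (d e3))
    (h31 : d (p e3 e1) = p (d e3) e1 + p e3 (d e1))
    (h32 : d (p e3 e2) = p (d e3) e2 + p e3 (d e2))
    (h33 : d (p e3 e3) = p (d e3) e3 + p e3 (d e3)) :
    ∀ x y, d (p x y) = p (d x) y + p x (d y) := by
  intro x y
  obtain ⟨a, b, c, hx⟩ : ∃ a b c, x = a • e1 + b • e2 + c • e3 := ⟨_, _, _, decomp x⟩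
  obtain ⟨a', b', c', hy⟩ : ∃ a b c, y = a • e1 + b • e2 + c • e3 := ⟨_, _, _, decomp y⟩
  subst hx hy
  simp only [map_add, map_smul, LinearMap.add_apply, LinearMap.smul_apply,
    h11, h12, h13, h21, h22, h23, h31, h32, h33]
  module

noncomputable def Amap : (Fin 3 → ℝ) →ₗ[ℝ] (Fin 3 → ℝ) :=
  (1/2 : ℝ) • (LinearMap.id : (Fin 3 → ℝ) →ₗ[ℝ] (Fin 3 → ℝ)) +
  (1/2 : ℝ) • ((LinearMap.proj 0 : (Fin 3 → ℝ) →ₗ[ℝ] ℝ).smulRight e1)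

noncomputable def Bmap : (Fin 3 → ℝ) →ₗ[ℝ] (Fin 3 → ℝ) :=
  (LinearMap.proj 1 : (Fin 3 → ℝ) →ₗ[ℝ] ℝ).smulRight e1

noncomputable def Cmap : (Fin 3 → ℝ) →ₗ[ℝ] (Fin 3 → ℝ) :=
  (LinearMap.proj 2 : (Fin 3 → ℝ) →ₗ[ℝ] ℝ).smulRight e1

lemma Amap_e1 : Amap e1 = e1 := by
  funext i; fin_cases i <;> simp [Amap, e1] <;> norm_num
lemma Amap_e2 : Amap e2 = (1/2 : ℝ) • e2 := by
  funext i; fin_cases i <;> simp [Amap, e1, e2]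
lemma Amap_e3 : Amap e3 = (1/2 : ℝ) • e3 := by
  funext i; fin_cases i <;> simp [Amap, e1, e3]
lemma Bmap_e1 : Bmap e1 = 0 := by simp [Bmap, e1]
lemma Bmap_e2 : Bmap e2 = e1 := by simp [Bmap, e2]
lemma Bmap_e3 : Bmap e3 = 0 := by simp [Bmap, e3]
lemma Cmap_e1 : Cmap e1 = 0 := by simp [Cmap, e1]
lemma Cmap_e2 : Cmap e2 = 0 := by simp [Cmap, e2]
lemma Cmap_e3 : Cmap e3 = e1 := by simp [Cmap, e3]

noncomputable def phi : (Fin 3 → ℝ) →ₗ[ℝ] ((Fin 3 → ℝ) →ₗ[ℝ] (Fin 3 → ℝ)) :=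
  ((LinearMap.proj 0 : (Fin 3 → ℝ) →ₗ[ℝ] ℝ).smulRight Amap) +
  ((LinearMap.proj 1 : (Fin 3 → ℝ) →ₗ[ℝ] ℝ).smulRight Bmap) +
  ((LinearMap.proj 2 : (Fin 3 → ℝ) →ₗ[ℝ] ℝ).smulRight Cmap)

lemma phi_apply (v : Fin 3 → ℝ) : phi v = v 0 • Amap + v 1 • Bmap + v 2 • Cmap := rfl


/-- Derivations of the 3-dimensional trialgebra Trias₃⁸ are exactly the maps
d(e₁) = α e₁, d(e₂) = β e₁ + (α/2) e₂, d(e₃) = γ e₁ + (α/2) e₃; in particular Der(T)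
has dimension 3. -/
theorem statement17 (l r m : (Fin 3 → ℝ) →ₗ[ℝ] (Fin 3 → ℝ) →ₗ[ℝ] (Fin 3 → ℝ))
    (hl11 : l e1 e1 = 0)
    (hl12 : l e1 e2 = 0)
    (hl13 : l e1 e3 = 0)
    (hl21 : l e2 e1 = 0)
    (hl22 : l e2 e2 = e1)
    (hl23 : l e2 e3 = e1)
    (hl31 : l e3 e1 = 0)
    (hl32 : l e3 e2 = e1)
    (hl33 : l e3 e3 = e1)
    (hr11 : r e1 e1 = 0)
    (hr12 : r e1 e2 = 0)
    (hr13 : r e1 e3 = 0)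
    (hr21 : r e2 e1 = 0)
    (hr22 : r e2 e2 = e1)
    (hr23 : r e2 e3 = e1)
    (hr31 : r e3 e1 = 0)
    (hr32 : r e3 e2 = e1)
    (hr33 : r e3 e3 = 0)
    (hm11 : m e1 e1 = 0)
    (hm12 : m e1 e2 = 0)
    (hm13 : m e1 e3 = 0)
    (hm21 : m e2 e1 = 0)
    (hm22 : m e2 e2 = e1)
    (hm23 : m e2 e3 = e1)
    (hm31 : m e3 e1 = 0)
    (hm32 : m e3 e2 = e1)
    (hm33 : m e3 e3 = 0) :
    (∀ d : (Fin 3 → ℝ) →ₗ[ℝ] (Fin 3 → ℝ),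
      d ∈ DerSubmodule l r m ↔ ∃ α β γ : ℝ,
        d e1 = α • e1 ∧ d e2 = β • e1 + (α / 2) • e2 ∧ d e3 = γ • e1 + (α / 2) • e3) ∧
    Module.finrank ℝ (DerSubmodule l r m) = 3 := by
    classical
  -- the key characterization
  have key : ∀ d : (Fin 3 → ℝ) →ₗ[ℝ] (Fin 3 → ℝ),
      d ∈ DerSubmodule l r m ↔ ∃ α β γ : ℝ,
        d e1 = α • e1 ∧ d e2 = β • e1 + (α / 2) • e2 ∧ d e3 = γ • e1 + (α / 2) • e3 := by
    intro d
    constructor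
    · intro hd
      have hd' : ∀ x y : (Fin 3 → ℝ),
          d (l x y) = l (d x) y + l x (d y) ∧
          d (r x y) = r (d x) y + r x (d y) ∧
          d (m x y) = m (d x) y + m x (d y) := hd
      have hdl : ∀ x y, d (l x y) = l (d x) y + l x (d y) := fun x y => (hd' x y).1
      have hdr : ∀ x y, d (r x y) = r (d x) y + r x (d y) := fun x y => (hd' x y).2.1
      obtain ⟨a0, a1, a2, ha⟩ : ∃ p q s, d e1 = p • e1 + q • e2 + s • e3 := ⟨_, _, _, decomp _⟩
      obtain ⟨b0, b1, b2, hb⟩ : ∃ p q s, d e2 = p • e1 + q • e2 + s • e3 := ⟨_, _, _, decomp _⟩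
      obtain ⟨c0, c1, c2, hc⟩ : ∃ p q s, d e3 = p • e1 + q • e2 + s • e3 := ⟨_, _, _, decomp _⟩
      have E1 := hdl e2 e2
      rw [hl22, ha, hb] at E1
      simp only [map_add, map_smul, LinearMap.add_apply, LinearMap.smul_apply,
        hl12, hl22, hl32, hl21, hl23, smul_zero, zero_add, add_zero] at E1
      have E1a := congrFun E1 0
      have E1b := congrFun E1 1
      have E1c := congrFun E1 2
      simp [e1, e2, e3] at E1a E1b E1c
      have E3 := hdl e3 e3
      rw [hl33, ha, hc] at E3
      simp only [map_add, map_smul, LinearMap.add_apply, LinearMap.smul_apply,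
        hl13, hl23, hl33, hl31, hl32, smul_zero, zero_add, add_zero] at E3
      have E3a := congrFun E3 0
      simp [e1, e2, e3] at E3a
      have E4 := hdr e3 e3
      rw [hr33, hc] at E4
      simp only [map_add, map_smul, map_zero, LinearMap.add_apply, LinearMap.smul_apply,
        hr13, hr23, hr33, hr31, hr32, smul_zero, zero_add, add_zero] at E4
      have E4a := congrFun E4 0
      simp [e1, e2, e3] at E4a
      have E5 := hdr e2 e3
      rw [hr23, ha, hb, hc] at E5
      simp only [map_add, map_smul, LinearMap.add_apply, LinearMap.smul_apply,
        hr13, hr23, hr33, hr12, hr22, hr32, hr21, smul_zero, zero_add, add_zero] at E5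
      have E5a := congrFun E5 0
      simp [e1, e2, e3] at E5a
      refine ⟨a0, b0, c0, ?_, ?_, ?_⟩
      · rw [ha, show a1 = 0 by linarith, show a2 = 0 by linarith]; simp
      · rw [hb, show b1 = a0/2 by linarith, show b2 = 0 by linarith]; simp
      · rw [hc, show c1 = 0 by linarith, show c2 = a0/2 by linarith]; simp [add_comm]
    · rintro ⟨α, β, γ, h1, h2, h3⟩
      have memL : ∀ x y, d (l x y) = l (d x) y + l x (d y) := by
        refine leibniz_ext l d ?_ ?_ ?_ ?_ ?_ ?_ ?_ ?_ ?_ <;>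
          simp only [hl11, hl12, hl13, hl21, hl22, hl23, hl31, hl32, hl33,
            h1, h2, h3, map_add, map_smul, map_zero, LinearMap.add_apply,
            LinearMap.smul_apply, LinearMap.zero_apply, smul_zero, add_zero, zero_add] <;>
          module
      have memR : ∀ x y, d (r x y) = r (d x) y + r x (d y) := by
        refine leibniz_ext r d ?_ ?_ ?_ ?_ ?_ ?_ ?_ ?_ ?_ <;>
          simp only [hr11, hr12, hr13, hr21, hr22, hr23, hr31, hr32, hr33,
            h1, h2, h3, map_add, map_smul, map_zero, LinearMap.add_apply,
            LinearMap.smul_apply, LinearMap.zero_apply, smul_zero, add_zero, zero_add] <;>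
          module
      have memM : ∀ x y, d (m x y) = m (d x) y + m x (d y) := by
        refine leibniz_ext m d ?_ ?_ ?_ ?_ ?_ ?_ ?_ ?_ ?_ <;>
          simp only [hm11, hm12, hm13, hm21, hm22, hm23, hm31, hm32, hm33,
            h1, h2, h3, map_add, map_smul, map_zero, LinearMap.add_apply,
            LinearMap.smul_apply, LinearMap.zero_apply, smul_zero, add_zero, zero_add] <;>
          module
      exact fun x y => ⟨memL x y, memR x y, memM x y⟩
  refine ⟨key, ?_⟩
  -- now the dimension count
  have phi_e1 : ∀ v : Fin 3 → ℝ, phi v e1 = v 0 • e1 := by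
    intro v
    simp [phi_apply, Amap_e1, Bmap_e1, Cmap_e1]
  have phi_e2 : ∀ v : Fin 3 → ℝ, phi v e2 = v 1 • e1 + (v 0 / 2) • e2 := by
    intro v
    simp [phi_apply, Amap_e2, Bmap_e2, Cmap_e2]
    module
  have phi_e3 : ∀ v : Fin 3 → ℝ, phi v e3 = v 2 • e1 + (v 0 / 2) • e3 := by
    intro v
    simp [phi_apply, Amap_e3, Bmap_e3, Cmap_e3]
    module
  have hmem : ∀ v : Fin 3 → ℝ, phi v ∈ DerSubmodule l r m := by
    intro v
    exact (key (phi v)).2 ⟨v 0, v 1, v 2, phi_e1 v, phi_e2 v, phi_e3 v⟩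
  let phi' : (Fin 3 → ℝ) →ₗ[ℝ] (DerSubmodule l r m) := phi.codRestrict _ hmem
  have hinj : Function.Injective phi' := by
    intro u v h
    have h' : phi u = phi v := congrArg Subtype.val h
    have q1 : phi u e1 = phi v e1 := by rw [h']
    have q2 : phi u e2 = phi v e2 := by rw [h']
    have q3 : phi u e3 = phi v e3 := by rw [h']
    have k1 := congrFun ((phi_e1 u).symm.trans (q1.trans (phi_e1 v))) 0
    have k2 := congrFun ((phi_e2 u).symm.trans (q2.trans (phi_e2 v))) 0
    have k3 := congrFun ((phi_e3 u).symm.trans (q3.trans (phi_e3 v))) 0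
    simp [e1, e2, e3] at k1 k2 k3
    funext i; fin_cases i <;> simpa using by linarith
  have hsurj : Function.Surjective phi' := by
    rintro ⟨d, hd⟩
    obtain ⟨α, β, γ, h1, h2, h3⟩ := (key d).1 hd
    refine ⟨![α, β, γ], ?_⟩
    apply Subtype.ext
    show phi ![α, β, γ] = d
    apply LinearMap.ext
    intro x
    obtain ⟨a, b, c, hx⟩ : ∃ a b c, x = a • e1 + b • e2 + c • e3 := ⟨_, _, _, decomp x⟩
    subst hx
    have p1 := phi_e1 ![α, β, γ]
    have p2 := phi_e2 ![α, β, γ]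
    have p3 := phi_e3 ![α, β, γ]
    simp only [Matrix.cons_val_zero, Matrix.cons_val_one, Matrix.head_cons,
      Matrix.cons_val_two, Matrix.tail_cons] at p1 p2 p3
    simp only [map_add, map_smul, p1, p2, p3, h1, h2, h3]
  have eqv := LinearEquiv.ofBijective phi' ⟨hinj, hsurj⟩
  rw [← eqv.finrank_eq]
  simp [Module.finrank_fin_fun]
end

section
/- Let T = Trias₃¹² be the 3-dimensional real algebra with basis e₁, e₂, e₃ and products e₁⊣e₁ = e₃, e₁⊣e₂ = e₃, e₂⊣e₁ = e₃; e₁⊢e₂ = e₃, e₂⊢e₁ = e₃, e₂⊢e₂ = e₃; e₂⊥e₁ = e₃, e₂⊥e₂ = e₃ (all other products of basis vectors are zero). Then the centroid Γ(T), viewed as a real vector space of linear endomorphisms of T, has dimension 3. -/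
/-- The centroid of the 3-dimensional trialgebra Trias₃¹², viewed as a real vector space
of linear endomorphisms, has dimension 3. -/
theorem statement19 (l r m : (Fin 3 → ℝ) →ₗ[ℝ] (Fin 3 → ℝ) →ₗ[ℝ] (Fin 3 → ℝ))
    (hl11 : l e1 e1 = e3)
    (hl12 : l e1 e2 = e3)
    (hl13 : l e1 e3 = 0)
    (hl21 : l e2 e1 = e3)
    (hl22 : l e2 e2 = 0)
    (hl23 : l e2 e3 = 0)
    (hl31 : l e3 e1 = 0)
    (hl32 : l e3 e2 = 0)
    (hl33 : l e3 e3 = 0)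
    (hr11 : r e1 e1 = 0)
    (hr12 : r e1 e2 = e3)
    (hr13 : r e1 e3 = 0)
    (hr21 : r e2 e1 = e3)
    (hr22 : r e2 e2 = e3)
    (hr23 : r e2 e3 = 0)
    (hr31 : r e3 e1 = 0)
    (hr32 : r e3 e2 = 0)
    (hr33 : r e3 e3 = 0)
    (hm11 : m e1 e1 = 0)
    (hm12 : m e1 e2 = 0)
    (hm13 : m e1 e3 = 0)
    (hm21 : m e2 e1 = e3)
    (hm22 : m e2 e2 = e3)
    (hm23 : m e2 e3 = 0)
    (hm31 : m e3 e1 = 0)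
    (hm32 : m e3 e2 = 0)
    (hm33 : m e3 e3 = 0) :
    Module.finrank ℝ (CentroidSubmodule l r m) = 3 := by
  
  classical
  -- basis expansion
  have hexp : ∀ x : Fin 3 → ℝ, x = x 0 • e1 + x 1 • e2 + x 2 • e3 := by
    intro x; funext i; fin_cases i <;> simp [e1, e2, e3]
  have hL : ∀ x y : Fin 3 → ℝ, l x y = (x 0 * y 0 + x 0 * y 1 + x 1 * y 0) • e3 := by
    intro x y
    conv_lhs => rw [hexp x, hexp y]
    simp only [map_add, map_smul, LinearMap.add_apply, LinearMap.smul_apply,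
      hl11, hl12, hl13, hl21, hl22, hl23, hl31, hl32, hl33,
      smul_zero, add_zero, zero_add]
    module
  have hR : ∀ x y : Fin 3 → ℝ, r x y = (x 0 * y 1 + x 1 * y 0 + x 1 * y 1) • e3 := by
    intro x y
    conv_lhs => rw [hexp x, hexp y]
    simp only [map_add, map_smul, LinearMap.add_apply, LinearMap.smul_apply,
      hr11, hr12, hr13, hr21, hr22, hr23, hr31, hr32, hr33,
      smul_zero, add_zero, zero_add]
    module
  have hM : ∀ x y : Fin 3 → ℝ, m x y = (x 1 * y 0 + x 1 * y 1) • e3 := by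
    intro x y
    conv_lhs => rw [hexp x, hexp y]
    simp only [map_add, map_smul, LinearMap.add_apply, LinearMap.smul_apply,
      hm11, hm12, hm13, hm21, hm22, hm23, hm31, hm32, hm33,
      smul_zero, add_zero, zero_add]
    module
  have he30 : e3 0 = 0 := by simp [e3]
  have he31 : e3 1 = 0 := by simp [e3]
  have he32 : e3 2 = 1 := by simp [e3]
  -- the candidate spanning maps
  set P1 : (Fin 3 → ℝ) →ₗ[ℝ] (Fin 3 → ℝ) :=
    (LinearMap.proj 0 : (Fin 3 → ℝ) →ₗ[ℝ] ℝ).smulRight e3 with hP1def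
  set P2 : (Fin 3 → ℝ) →ₗ[ℝ] (Fin 3 → ℝ) :=
    (LinearMap.proj 1 : (Fin 3 → ℝ) →ₗ[ℝ] ℝ).smulRight e3 with hP2def
  set F0 : (Fin 3 → ℝ) →ₗ[ℝ] ((Fin 3 → ℝ) →ₗ[ℝ] (Fin 3 → ℝ)) :=
    (LinearMap.proj 0 : (Fin 3 → ℝ) →ₗ[ℝ] ℝ).smulRight LinearMap.id
      + (LinearMap.proj 1 : (Fin 3 → ℝ) →ₗ[ℝ] ℝ).smulRight P1
      + (LinearMap.proj 2 : (Fin 3 → ℝ) →ₗ[ℝ] ℝ).smulRight P2 with hF0def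
  have hF0 : ∀ v z : Fin 3 → ℝ,
      F0 v z = v 0 • z + v 1 • (z 0 • e3) + v 2 • (z 1 • e3) := by
    intro v z
    simp [hF0def, hP1def, hP2def, LinearMap.smulRight_apply]
  have hmem : ∀ v : Fin 3 → ℝ, F0 v ∈ CentroidSubmodule l r m := by
    intro v
    intro x y
    have key : ∀ z : Fin 3 → ℝ, ∀ i : Fin 3, e3 i = 0 → (F0 v z) i = v 0 * z i := by
      intro z i hi
      rw [hF0]
      simp only [Pi.add_apply, Pi.smul_apply, smul_eq_mul, hi, mul_zero, add_zero]
    have hx0 : (F0 v x) 0 = v 0 * x 0 := key x 0 he30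
    have hx1 : (F0 v x) 1 = v 0 * x 1 := key x 1 he31
    have hy0 : (F0 v y) 0 = v 0 * y 0 := key y 0 he30
    have hy1 : (F0 v y) 1 = v 0 * y 1 := key y 1 he31
    refine ⟨⟨?_, ?_⟩, ⟨?_, ?_⟩, ⟨?_, ?_⟩⟩ <;>
      simp only [hL, hR, hM, hx0, hx1, hy0, hy1] <;>
      rw [hF0] <;>
      simp only [Pi.smul_apply, he30, he31, smul_eq_mul, mul_zero, zero_smul,
        smul_zero, add_zero, zero_add, smul_smul] <;>
      congr 1 <;> ring
  
  -- the mutually inverse linear maps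
  set F : (Fin 3 → ℝ) →ₗ[ℝ] (CentroidSubmodule l r m) :=
    F0.codRestrict (CentroidSubmodule l r m) hmem with hFdef
  set G : (CentroidSubmodule l r m) →ₗ[ℝ] (Fin 3 → ℝ) :=
    { toFun := fun ψ => ![((ψ : (Fin 3 → ℝ) →ₗ[ℝ] (Fin 3 → ℝ)) e1) 0,
        ((ψ : (Fin 3 → ℝ) →ₗ[ℝ] (Fin 3 → ℝ)) e1) 2,
        ((ψ : (Fin 3 → ℝ) →ₗ[ℝ] (Fin 3 → ℝ)) e2) 2]
      map_add' := by
        intro a b; funext i; fin_cases i <;>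
          simp [Matrix.cons_val_zero, Matrix.cons_val_one]
      map_smul' := by
        intro c a; funext i; fin_cases i <;> simp } with hGdef
  have hGF : G.comp F = LinearMap.id := by
    apply LinearMap.ext
    intro v
    have h1 : ((F v : (Fin 3 → ℝ) →ₗ[ℝ] (Fin 3 → ℝ)) e1) = v 0 • e1 + v 1 • e3 := by
      show F0 v e1 = _
      rw [hF0]
      simp [e1]
    have h2 : ((F v : (Fin 3 → ℝ) →ₗ[ℝ] (Fin 3 → ℝ)) e2) = v 0 • e2 + v 2 • e3 := by
      show F0 v e2 = _
      rw [hF0]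
      simp [e2]
    show (![_, _, _] : Fin 3 → ℝ) = v
    funext i
    fin_cases i
    · simpa [e1, e3] using congrFun h1 0
    · simpa [e1, e3] using congrFun h1 2
    · simpa [e2, e3] using congrFun h2 2
  have hFG : F.comp G = LinearMap.id := by
    apply LinearMap.ext
    rintro ⟨ψ, hψ⟩
    apply Subtype.ext
    have hψ' : ∀ x y : Fin 3 → ℝ,
        (ψ (l x y) = l (ψ x) y ∧ ψ (l x y) = l x (ψ y)) ∧
        (ψ (r x y) = r (ψ x) y ∧ ψ (r x y) = r x (ψ y)) ∧
        (ψ (m x y) = m (ψ x) y ∧ ψ (m x y) = m x (ψ y)) := hψ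
    -- derive the structure of ψ
    have hb : ψ e1 1 = 0 := by
      have h := (hψ' e1 e1).2.1.1
      rw [hr11, map_zero, hR] at h
      have h2 := congrFun h.symm 2
      simpa [e1, e3] using h2
    have hd : ψ e2 0 = 0 := by
      have h := (hψ' e2 e2).1.1
      rw [hl22, map_zero, hL] at h
      have h2 := congrFun h.symm 2
      simpa [e2, e3] using h2
    have hψ3 : ψ e3 = ψ e1 0 • e3 := by
      have h := (hψ' e2 e1).1.2
      rw [hl21, hL] at h
      rw [h]
      simp [e2]
    have hf : ψ e2 1 = ψ e1 0 := by
      have h := (hψ' e2 e1).1.1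
      rw [hl21, hL, hψ3] at h
      have h2 := congrFun h 2
      simpa [e1, e3, hd] using h2.symm
    -- now show F (G ⟨ψ,hψ⟩) = ψ
    apply LinearMap.ext
    intro x
    show F0 _ x = ψ x
    rw [hF0]
    have hx : ψ x = x 0 • ψ e1 + x 1 • ψ e2 + x 2 • ψ e3 := by
      conv_lhs => rw [hexp x]
      simp [map_add, map_smul]
    have hG0 : G ⟨ψ, hψ⟩ 0 = ψ e1 0 := by simp [hGdef]
    have hG1 : G ⟨ψ, hψ⟩ 1 = ψ e1 2 := by simp [hGdef]
    have hG2 : G ⟨ψ, hψ⟩ 2 = ψ e2 2 := by simp [hGdef]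
    rw [hx, hψ3, hG0, hG1, hG2]
    funext i
    fin_cases i <;>
      simp [e3, hb, hd, hf, Matrix.vecHead, Matrix.vecTail] <;>
      ring
  have equiv : (Fin 3 → ℝ) ≃ₗ[ℝ] (CentroidSubmodule l r m) :=
    LinearEquiv.ofLinear F G hFG hGF
  rw [← equiv.finrank_eq]
  simp
end
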